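/- Let m ≥ 0. The set of matrices S ∈ M_{(m+2)×2}(K) such that there exist P′ ∈ K^{m+1} and Q, R ∈ K^{m+1} with S·X^1_2 = X^{m+1}_{m+2} P′, S·Y^1_2 = Y^{m+1}_{m+2} Q and S·Z^1_2 = Z^{m+1}_{m+2} R equals { S : S_{m+2,1} = 0, S_{1,2} = 0, and S_{1,1} + S_{1,2} = Σ_{i=2}^{m+2} ε_i (S_{i,1} + S_{i,2}) }, where ε_i = +1 if i ≡ 2 or 3 (mod 4) and ε_i = −1 if i ≡ 0 or 1 (mod 4). In particular this set is a (2m+1)-dimensional subspace of M_{(m+2)×2}(K). -/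

import Mathlib

/-- `X^n_{n+i}`: the `(n+i) × n` matrix whose top `n` rows form the identity and whose
bottom `i` rows are zero. -/
def Xmat (K : Type*) [Field K] (n i : ℕ) : Matrix (Fin (n + i)) (Fin n) K :=
  Matrix.of fun r c => if (r : ℕ) = (c : ℕ) then 1 else 0

/-- `Y^n_{n+i}`: the `(n+i) × n` matrix whose top `i` rows are zero and whose bottom
`n` rows form the identity. -/
def Ymat (K : Type*) [Field K] (n i : ℕ) : Matrix (Fin (n + i)) (Fin n) K :=
  Matrix.of fun r c => if (r : ℕ) = (c : ℕ) + i then 1 else 0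

/-- The matrix `Z^{m+1}_{m+2}`, determined by `(Zr)_1 = r_1 + r_2` and
`(Zr)_i = r_{i-1} + r_{i+1}` for `2 ≤ i ≤ m+2` (1-based, `r_j = 0` for `j > m+1`). -/
def Zmat2 (K : Type*) [Field K] (m : ℕ) : Matrix (Fin (m + 2)) (Fin (m + 1)) K :=
  Matrix.of fun r c =>
    if (r : ℕ) = 0 then (if (c : ℕ) = 0 ∨ (c : ℕ) = 1 then 1 else 0)
    else (if (c : ℕ) + 1 = (r : ℕ) ∨ (c : ℕ) = (r : ℕ) + 1 then 1 else 0)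

/-- `ε_i = +1` if `i ≡ 2, 3 (mod 4)` and `ε_i = -1` if `i ≡ 0, 1 (mod 4)`. -/
def eps4 (K : Type*) [Field K] (i : ℕ) : K :=
  if i % 4 = 2 ∨ i % 4 = 3 then 1 else -1

/-- `Σ_{i=2}^{m+2} ε_i (S_{i,1} + S_{i,2})` (1-based row indices). -/
def rowSum (K : Type*) [Field K] (m : ℕ) (S : Matrix (Fin (m + 2)) (Fin 2) K) : K :=
  ∑ i : Fin (m + 2), (if (i : ℕ) = 0 then 0 else eps4 K ((i : ℕ) + 1)) * (S i 0 + S i 1)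

/-- `S·X^1_2 = X^{m+1}_{m+2} P'`, `S·Y^1_2 = Y^{m+1}_{m+2} Q` and
`S·Z^1_2 = Z^{m+1}_{m+2} R` for some `P', Q, R ∈ K^{m+1}`. -/
def cond6 (K : Type*) [Field K] (m : ℕ) (S : Matrix (Fin (m + 2)) (Fin 2) K) : Prop :=
  ∃ P' Q R : Fin (m + 1) → K,
    S.mulVec ![1, 0] = (Xmat K (m + 1) 1).mulVec P' ∧
    S.mulVec ![0, 1] = (Ymat K (m + 1) 1).mulVec Q ∧
    S.mulVec ![1, 1] = (Zmat2 K m).mulVec R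

/-! The three conditions decouple column by column. The range of `X` is cut out by the vanishing
of the last entry, the range of `Y` by the vanishing of the first one. The range of `Z` is the
kernel of the functional `(-1, ε₂, …, ε_{m+2})`: this functional kills every column of `Z`, because
`ε_i + ε_{i+2} = 0`, and deleting the first row of `Z` leaves a unitriangular square matrix, so `Z`
hits every vector of that kernel. The resulting three linear conditions on `S` are independent, so
they cut out a subspace of codimension 3 in the `2(m+2)`-dimensional space of matrices. -/

theorem Fin.sum_ite_val_eq {M : Type*} [AddCommMonoid M] {n : ℕ} (k : ℕ) (f : Fin n → M) :
    ∑ c : Fin n, (if k = c then f c else 0) = if h : k < n then f ⟨k, h⟩ else 0 := by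
  split_ifs with h
  · simp [← Fin.ext_iff (a := (⟨k, h⟩ : Fin n))]
  · exact Finset.sum_eq_zero fun c _ => if_neg (by omega)

section
variable {K : Type*} [Field K]

open Matrix

theorem Xmat_mulVec_apply (n i : ℕ) (P : Fin n → K) (r : Fin (n + i)) :
    (Xmat K n i *ᵥ P) r = if h : (r : ℕ) < n then P ⟨r, h⟩ else 0 := by
  simp only [mulVec, dotProduct, Xmat, of_apply, ite_mul, one_mul, zero_mul]
  exact Fin.sum_ite_val_eq _ _

theorem Ymat_mulVec_apply (n i : ℕ) (Q : Fin n → K) (r : Fin (n + i)) :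
    (Ymat K n i *ᵥ Q) r = if h : i ≤ (r : ℕ) then Q ⟨r - i, by omega⟩ else 0 := by
  simp only [mulVec, dotProduct, Ymat, of_apply, ite_mul, one_mul, zero_mul]
  split_ifs with h
  · simp only [show ∀ c : Fin n, (r : ℕ) = c + i ↔ (r : ℕ) - i = c from fun c => by omega]
    rw [Fin.sum_ite_val_eq, dif_pos (by omega)]
  · exact Finset.sum_eq_zero fun c _ => if_neg (by omega)

theorem exists_eq_Xmat_mulVec_iff (n i : ℕ) (v : Fin (n + i) → K) :
    (∃ P, v = Xmat K n i *ᵥ P) ↔ ∀ r : Fin (n + i), n ≤ r → v r = 0 := by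
  refine ⟨fun ⟨P, hP⟩ r hr => by rw [hP, Xmat_mulVec_apply, dif_neg (by omega)], fun h => ?_⟩
  refine ⟨fun c => v (Fin.castAdd i c), funext fun r => ?_⟩
  rw [Xmat_mulVec_apply]
  split_ifs with hr
  · rfl
  · exact h r (by omega)

theorem exists_eq_Ymat_mulVec_iff (n i : ℕ) (v : Fin (n + i) → K) :
    (∃ Q, v = Ymat K n i *ᵥ Q) ↔ ∀ r : Fin (n + i), (r : ℕ) < i → v r = 0 := by
  refine ⟨fun ⟨Q, hQ⟩ r hr => by rw [hQ, Ymat_mulVec_apply, dif_neg (by omega)], fun h => ?_⟩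
  refine ⟨fun c => v ⟨c + i, by omega⟩, funext fun r => ?_⟩
  rw [Ymat_mulVec_apply]
  split_ifs with hr
  · congr 1; ext; simp only; omega
  · exact h r (by omega)

theorem eps4_add_two (n : ℕ) : eps4 K (n + 2) = -eps4 K n := by
  simp only [eps4]
  split_ifs <;> first | omega | norm_num

def zAnnihilator (K : Type*) [Field K] (m : ℕ) : Fin (m + 2) → K :=
  Fin.cons (-1) fun i => eps4 K (i + 2)

theorem zAnnihilator_vecMul_Zmat2 (m : ℕ) : zAnnihilator K m ᵥ* Zmat2 K m = 0 := by
  ext ⟨c, hc⟩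
  rw [vecMul, dotProduct, Fin.sum_univ_succ]
  simp only [zAnnihilator, Fin.cons_zero, Fin.cons_succ, Zmat2, of_apply, Fin.val_zero,
    Fin.val_succ, Pi.zero_apply, if_true, Nat.succ_ne_zero, if_false, add_left_inj]
  rw [Fin.sum_univ_eq_sum_range fun r => eps4 K (r + 2) * if c = r ∨ c = r + 1 + 1 then 1 else 0]
  rcases c with _ | _ | c
  · rw [Finset.sum_eq_single 0 (fun r _ hr => by rw [if_neg (by omega), mul_zero]) (by simp)]
    simp [eps4]
  · rw [Finset.sum_eq_single 1 (fun r _ hr => by rw [if_neg (by omega), mul_zero])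
      (fun h => (h (Finset.mem_range.mpr (by omega))).elim)]
    simp [eps4]
  · rw [Finset.sum_eq_add c (c + 2) (by omega)
      (fun r _ hr => by rw [if_neg (by omega), mul_zero])
      (fun h => (h (Finset.mem_range.mpr (by omega))).elim)
      (fun h => (h (Finset.mem_range.mpr (by omega))).elim)]
    simp [eps4_add_two]

theorem det_Zmat2_submatrix_succ (m : ℕ) : ((Zmat2 K m).submatrix Fin.succ id).det = 1 := by
  rw [det_of_isUpperTriangular]
  · simp [Zmat2]
  · intro r c hcr
    simp only [submatrix_apply, id, Zmat2, of_apply, Fin.val_succ, Nat.succ_ne_zero, if_false]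
    rw [if_neg (by have : (c : ℕ) < r := hcr; omega)]

theorem zAnnihilator_dotProduct (m : ℕ) (v : Fin (m + 2) → K) :
    zAnnihilator K m ⬝ᵥ v = -v 0 + ∑ i : Fin (m + 1), eps4 K (i + 2) * v i.succ := by
  simp [dotProduct, Fin.sum_univ_succ, zAnnihilator]

theorem exists_eq_Zmat2_mulVec_iff (m : ℕ) (v : Fin (m + 2) → K) :
    (∃ R, v = Zmat2 K m *ᵥ R) ↔ zAnnihilator K m ⬝ᵥ v = 0 := by
  refine ⟨fun ⟨R, hR⟩ => by rw [hR, dotProduct_mulVec, zAnnihilator_vecMul_Zmat2, zero_dotProduct],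
    fun hv => ?_⟩
  have hunit : IsUnit ((Zmat2 K m).submatrix Fin.succ id) := by
    rw [isUnit_iff_isUnit_det, det_Zmat2_submatrix_succ]; exact isUnit_one
  obtain ⟨R, hR⟩ := mulVec_surjective_iff_isUnit.mpr hunit fun i => v i.succ
  have htail : ∀ i : Fin (m + 1), (Zmat2 K m *ᵥ R) i.succ = v i.succ := fun i => congrFun hR i
  have hZR := dotProduct_mulVec (zAnnihilator K m) (Zmat2 K m) R
  rw [zAnnihilator_vecMul_Zmat2, zero_dotProduct, zAnnihilator_dotProduct] at hZR
  rw [zAnnihilator_dotProduct] at hv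
  simp only [htail] at hZR
  -- `Z R` and `v` agree off row 0 and are both killed by the functional, whose row-0 weight is -1.
  refine ⟨R, funext fun i => Fin.cases ?_ (fun i => (htail i).symm) i⟩
  linear_combination hZR - hv

theorem mulVec_vec2_apply {R ι : Type*} [CommSemiring R] (S : Matrix ι (Fin 2) R) (a b : R)
    (i : ι) : (S *ᵥ ![a, b]) i = S i 0 * a + S i 1 * b := by
  simp [mulVec, dotProduct, Fin.sum_univ_two]

theorem zAnnihilator_dotProduct_mulVec_one_one (m : ℕ) (S : Matrix (Fin (m + 2)) (Fin 2) K) :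
    zAnnihilator K m ⬝ᵥ (S *ᵥ ![1, 1]) = rowSum K m S - (S 0 0 + S 0 1) := by
  rw [zAnnihilator_dotProduct, rowSum, Fin.sum_univ_succ (n := m + 1)]
  simp only [mulVec_vec2_apply, mul_one, Fin.val_zero, Fin.val_succ, if_true, Nat.succ_ne_zero,
    if_false, zero_mul, zero_add]
  ring

theorem cond6_iff (m : ℕ) (S : Matrix (Fin (m + 2)) (Fin 2) K) :
    cond6 K m S ↔ S (Fin.last (m + 1)) 0 = 0 ∧ S 0 1 = 0 ∧ S 0 0 + S 0 1 = rowSum K m S := by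
  simp only [cond6, exists_and_left, exists_and_right]
  refine and_congr ?_ (and_congr ?_ ?_)
  · refine (exists_eq_Xmat_mulVec_iff (m + 1) 1 _).trans ?_
    simp only [mulVec_vec2_apply, mul_one, mul_zero, add_zero]
    exact ⟨fun h => h _ le_rfl, fun h r hr => by
      rwa [show r = Fin.last (m + 1) from Fin.ext (show (r : ℕ) = m + 1 by omega)]⟩
  · refine (exists_eq_Ymat_mulVec_iff (m + 1) 1 _).trans ?_
    simp only [mulVec_vec2_apply, mul_one, mul_zero, zero_add]
    exact ⟨fun h => h 0 Nat.one_pos, fun h r hr => by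
      rwa [show r = 0 from Fin.ext (show (r : ℕ) = 0 by omega)]⟩
  · rw [exists_eq_Zmat2_mulVec_iff, zAnnihilator_dotProduct_mulVec_one_one, sub_eq_zero, eq_comm]

def cond6Map (K : Type*) [Field K] (m : ℕ) : Matrix (Fin (m + 2)) (Fin 2) K →ₗ[K] Fin 3 → K where
  toFun S := ![S (Fin.last (m + 1)) 0, S 0 1, zAnnihilator K m ⬝ᵥ (S *ᵥ ![1, 1])]
  map_add' S T := by simp [add_mulVec]
  map_smul' a S := by simp [smul_mulVec]

theorem cond6Map_eq_zero_iff (m : ℕ) (S : Matrix (Fin (m + 2)) (Fin 2) K) :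
    cond6Map K m S = 0 ↔ cond6 K m S := by
  simp [cond6_iff, cond6Map, zAnnihilator_dotProduct_mulVec_one_one, sub_eq_zero,
    eq_comm (a := rowSum K m S)]

theorem cond6Map_surjective (m : ℕ) : Function.Surjective (cond6Map K m) := by
  intro u
  have hlast : Fin.last (m + 1) ≠ 0 := Fin.ne_of_val_ne (Nat.succ_ne_zero m)
  -- The entry `S 0 0` only enters the third coordinate, with weight -1, so it can correct it.
  refine ⟨single (Fin.last (m + 1)) 0 (u 0) + single 0 1 (u 1) +
    single 0 0 (zAnnihilator K m (Fin.last (m + 1)) * u 0 - u 1 - u 2), ?_⟩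
  ext k
  fin_cases k
  · simp [cond6Map, hlast]
  · simp [cond6Map]
  · simp [cond6Map, add_mulVec, single_mulVec, dotProduct, Function.update_apply, mul_add,
      Finset.sum_add_distrib, zAnnihilator, sub_eq_add_neg, add_assoc,
      add_left_comm, add_neg_cancel_left]

theorem finrank_ker_cond6Map (m : ℕ) :
    Module.finrank K (LinearMap.ker (cond6Map K m)) = 2 * m + 1 := by
  have h := LinearMap.finrank_range_add_finrank_ker (cond6Map K m)
  rw [LinearMap.range_eq_top.mpr (cond6Map_surjective m), finrank_top, Module.finrank_fin_fun,
    Module.finrank_matrix] at h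
  simp only [Fintype.card_fin, Module.finrank_self, mul_one] at h
  omega

end

theorem stmt6 (K : Type*) [Field K] (m : ℕ) :
    (∀ S : Matrix (Fin (m + 2)) (Fin 2) K,
      cond6 K m S ↔
        (S ⟨m + 1, by omega⟩ 0 = 0 ∧ S 0 1 = 0 ∧ S 0 0 + S 0 1 = rowSum K m S)) ∧
    ∃ W : Submodule K (Matrix (Fin (m + 2)) (Fin 2) K),
      (∀ S, S ∈ W ↔ cond6 K m S) ∧ Module.finrank K W = 2 * m + 1 :=
  ⟨cond6_iff m, LinearMap.ker (cond6Map K m),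
    fun S => LinearMap.mem_ker.trans (cond6Map_eq_zero_iff m S), finrank_ker_cond6Map m⟩
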